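/- arXiv:math/0403039 — 6 statements merged into one kernel-verified Lean document; each statement's English description precedes it below -/
import Mathlib

section
/- Let Γ be a finite group, m ≥ 1 an integer, and σ an automorphism of Γ with σ^{2m} = id_Γ. Let π : Γ → GL(V) be an irreducible finite-dimensional complex representation with character ξ, and let S : V → V be a linear automorphism such that S ∘ π(g) ∘ S⁻¹ = π(σ²(g)) for all g ∈ Γ and S^m = id_V. Set c = |Γ|⁻¹ · Σ_{g∈Γ} Tr(π(g·σ(g)) ∘ S). If ξ∘σ equals the complex conjugate character ξ̄ (i.e. ξ(σ(g)) = conj(ξ(g)) for all g), then c^{2m} = 1, so c is a nonzero 2m-th root of unity; otherwise c = 0. -/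
/-!
In a basis, `π` becomes a matrix representation `P`, and `Γ` acts on matrices by
`X ↦ P g * X * (P (σ g))ᵀ`. With `F X = Xᵀ * Sᵀ` one has `c = tr (Q ∘ F)`, where `Q` is the
averaging projection onto the invariant matrices; `F` commutes with `Q` because
`F ∘ (g • ·) = (σ g • ·) ∘ F`, and `F ^ (2m) = 1` because `F² X = S X Sᵀ`.

By Schur's lemma a nonzero invariant `Y` is invertible and the invariants form at most a line.
Such a `Y` gives `P (σ g)ᵀ = Y⁻¹ P g⁻¹ Y`, so `ξ ∘ σ = ξ̄` since `ξ (g⁻¹) = ξ̄ g` (averaging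
`(P g)ᴴ (P g)` gives a Hermitian form for which every `P g` is unitary). Conversely, if
`ξ ∘ σ = ξ̄` the dimension of the invariants is `|Γ|⁻¹ ∑ |ξ g|² > 0`. So either there are no
invariants and `c = 0`, or they form a line on which `F` acts by the scalar `c`, and `c ^ (2m) = 1`.
-/

open Matrix Module
open scoped ComplexOrder

section TraceOnMatrices

variable {R ι : Type*} [CommRing R] [Fintype ι] [DecidableEq ι]

lemma trace_eq_sum_apply_single (f : Module.End R (Matrix ι ι R)) :
    LinearMap.trace R _ f = ∑ i, ∑ j, f (single i j 1) i j := by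
  rw [LinearMap.trace_eq_matrix_trace R (Matrix.stdBasis R ι ι), Matrix.trace,
    ← Fintype.sum_prod_type']
  refine Finset.sum_congr rfl fun p _ => ?_
  rw [diag_apply, LinearMap.toMatrix_apply, stdBasis_eq_single]
  simp [Matrix.stdBasis, Pi.basis_repr]

lemma trace_mulLeft_comp_mulRight (A B : Matrix ι ι R) :
    LinearMap.trace R _ (LinearMap.mulLeft R A ∘ₗ LinearMap.mulRight R B) = A.trace * B.trace := by
  simp [trace_eq_sum_apply_single, Matrix.mul_apply, Matrix.single_apply, Matrix.trace,
    Finset.sum_mul_sum, ite_and]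

lemma trace_mulLeft_comp_mulRight_comp_transpose (A B : Matrix ι ι R) :
    LinearMap.trace R _ (LinearMap.mulLeft R A ∘ₗ LinearMap.mulRight R B ∘ₗ
      (transposeLinearEquiv ι ι R R).toLinearMap) = (A * Bᵀ).trace := by
  simp [trace_eq_sum_apply_single, Matrix.mul_apply, Matrix.single_apply, Matrix.trace,
    Matrix.transpose_apply, ite_and]

end TraceOnMatrices

lemma LinearMap.IsProj.trace_mul_pow_eq_one {K W : Type*} [Field K] [AddCommGroup W] [Module K W]
    [FiniteDimensional K W] {p : Submodule K W} {Q F : Module.End K W} (hQ : IsProj p Q)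
    (hp : finrank K p = 1) (hFQ : Commute F Q) {N : ℕ} (hF : F ^ N = 1) :
    LinearMap.trace K W (Q * F) ^ N = 1 := by
  obtain ⟨y, hy0, hspan⟩ := finrank_eq_one_iff'.mp hp
  have hFp : ∀ x ∈ p, F x ∈ p := fun x hx => by
    rw [← hQ.map_id x hx, ← Module.End.mul_apply, hFQ.eq]
    exact hQ.map_mem _
  obtain ⟨a, ha⟩ := hspan ⟨F y, hFp y y.2⟩
  have hFy : F y = a • (y : W) := congrArg Subtype.val ha.symm
  have hQF : Q * F = a • Q := by
    ext x
    obtain ⟨t, ht⟩ := hspan ⟨Q x, hQ.map_mem x⟩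
    have hQx : Q x = t • (y : W) := congrArg Subtype.val ht.symm
    rw [← hFQ.eq, Module.End.mul_apply, LinearMap.smul_apply, hQx, map_smul, hFy, smul_comm]
  have hpow : ∀ n : ℕ, (F ^ n) y = a ^ n • (y : W) := by
    intro n
    induction n with
    | zero => simp
    | succ n ih => rw [pow_succ', Module.End.mul_apply, ih, map_smul, hFy, smul_smul, pow_succ]
  have hy : (y : W) ≠ 0 := by simpa using hy0
  rw [hQF, map_smul, hQ.trace, hp, Nat.cast_one, smul_eq_mul, mul_one]
  have h := hpow N
  rw [hF, Module.End.one_apply] at h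
  exact smul_left_injective K hy (by simpa using h.symm)

namespace Representation

variable {k G V : Type*} [Field k] [Group G] [Fintype G] [Invertible (Fintype.card G : k)]
  [AddCommGroup V] [Module k V]

lemma averageMap_eq_smul_sum (ρ : Representation k G V) :
    ρ.averageMap = ⅟(Fintype.card G : k) • ∑ g, ρ g := by
  ext v
  simp [GroupAlgebra.average, map_sum]

lemma commute_averageMap_of_mul_eq (ρ : Representation k G V) (σ : MulAut G)
    {F : Module.End k V} (hF : ∀ g, F * ρ g = ρ (σ g) * F) : Commute F ρ.averageMap := by
  rw [Commute, SemiconjBy, averageMap_eq_smul_sum, mul_smul_comm, smul_mul_assoc, Finset.mul_sum,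
    Finset.sum_mul]
  simp_rw [hF]
  congr 1
  exact Equiv.sum_comp σ.toEquiv fun g => ρ g * F

end Representation

section Unitarization

variable {𝕜 Γ ι : Type*} [RCLike 𝕜] [Group Γ] [Fintype Γ] [Fintype ι] [DecidableEq ι]

lemma exists_posDef_conjTranspose_mul_mul_eq (P : Γ →* Matrix ι ι 𝕜) :
    ∃ H : Matrix ι ι 𝕜, H.PosDef ∧ ∀ g, (P g)ᴴ * H * P g = H := by
  refine ⟨∑ h, (P h)ᴴ * P h, posDef_sum Finset.univ_nonempty fun h _ => ?_, fun g => ?_⟩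
  · exact PosDef.conjTranspose_mul_self _ <|
      mulVec_injective_iff_isUnit.mpr ((Group.isUnit h).map P)
  · simp_rw [Finset.mul_sum, Finset.sum_mul, ← Matrix.mul_assoc, Matrix.mul_assoc _ (P _),
      ← conjTranspose_mul, ← map_mul]
    exact Equiv.sum_comp (Equiv.mulRight g) fun h => (P h)ᴴ * P h

lemma trace_map_inv_eq_star (P : Γ →* Matrix ι ι 𝕜) (g : Γ) : (P g⁻¹).trace = star (P g).trace := by
  obtain ⟨H, hH, hPH⟩ := exists_posDef_conjTranspose_mul_mul_eq P
  have hdet : IsUnit H.det := (isUnit_iff_isUnit_det H).mp hH.isUnit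
  have hHP : H * P g⁻¹ = (P g)ᴴ * H := by
    conv_lhs => rw [← hPH g]
    rw [Matrix.mul_assoc, ← map_mul, mul_inv_cancel, map_one, Matrix.mul_one]
  rw [← trace_conjTranspose, ← nonsing_inv_mul_cancel_left H (P g⁻¹) hdet, hHP, trace_mul_comm,
    mul_nonsing_inv_cancel_right H _ hdet]

end Unitarization

section TwistedConjugation

variable {K Γ ι : Type*} [Field K] [Group Γ] [Fintype ι] [DecidableEq ι]

def IsIrreducibleMatrixRep (P : Γ →* Matrix ι ι K) : Prop :=
  ∀ U : Submodule K (ι → K), (∀ g, ∀ v ∈ U, P g *ᵥ v ∈ U) → U = ⊥ ∨ U = ⊤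

namespace IsIrreducibleMatrixRep

variable {P : Γ →* Matrix ι ι K} (hP : IsIrreducibleMatrixRep P)
include hP

lemma isUnit_of_mul_eq_mul {X : Matrix ι ι K} (Q : Γ → Matrix ι ι K)
    (hX : ∀ g, P g * X = X * Q g) (hX0 : X ≠ 0) : IsUnit X := by
  have hrange :
      ∀ g, ∀ v ∈ LinearMap.range X.mulVecLin, P g *ᵥ v ∈ LinearMap.range X.mulVecLin := by
    rintro g _ ⟨w, rfl⟩
    exact ⟨Q g *ᵥ w, by simp [mulVec_mulVec, hX]⟩
  rcases hP _ hrange with h | h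
  · refine absurd (Matrix.toLin'.injective ?_) hX0
    simpa [Matrix.toLin'_apply'] using LinearMap.range_eq_bot.mp h
  · exact mulVec_surjective_iff_isUnit.mp (LinearMap.range_eq_top.mp h)

/-- For an eigenvalue `a` of `Z`, the singular matrix `Z - a • 1` commutes with every `P g`,
so by `isUnit_of_mul_eq_mul` it vanishes. -/
lemma exists_eq_smul_one [IsAlgClosed K] [Nonempty ι] {Z : Matrix ι ι K}
    (hZ : ∀ g, Commute (P g) Z) : ∃ a : K, Z = a • 1 := by
  obtain ⟨a, ha⟩ := Module.End.exists_eigenvalue Z.mulVecLin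
  obtain ⟨v, hv⟩ := ha.exists_hasEigenvector
  refine ⟨a, by_contra fun hZa => ?_⟩
  have hunit := hP.isUnit_of_mul_eq_mul (fun g => P g) (fun g => by
    rw [mul_sub, sub_mul, (hZ g).eq, mul_smul_comm, smul_mul_assoc, Matrix.mul_one, Matrix.one_mul])
    (sub_ne_zero.mpr hZa)
  apply hv.2
  apply mulVec_injective_iff_isUnit.mpr hunit
  simpa [sub_mulVec, sub_eq_zero, smul_mulVec] using hv.apply_eq_smul

end IsIrreducibleMatrixRep

def twistedConj (P : Γ →* Matrix ι ι K) (σ : MulAut Γ) : Representation K Γ (Matrix ι ι K) where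
  toFun g := LinearMap.mulLeft K (P g) ∘ₗ LinearMap.mulRight K (P (σ g))ᵀ
  map_one' := by ext : 1; simp
  map_mul' g h := by ext : 1; simp [transpose_mul, Matrix.mul_assoc]

variable (P : Γ →* Matrix ι ι K) (σ : MulAut Γ)

@[simp]
lemma twistedConj_apply (g : Γ) (X : Matrix ι ι K) :
    twistedConj P σ g X = P g * X * (P (σ g))ᵀ := by
  simp [twistedConj, Matrix.mul_assoc]

lemma trace_twistedConj (g : Γ) :
    LinearMap.trace K _ (twistedConj P σ g) = (P g).trace * (P (σ g)).trace := by
  rw [twistedConj, MonoidHom.coe_mk, OneHom.coe_mk, trace_mulLeft_comp_mulRight, trace_transpose]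

lemma mem_invariants_twistedConj_iff (X : Matrix ι ι K) :
    X ∈ (twistedConj P σ).invariants ↔ ∀ g, P g * X = X * (P (σ g⁻¹))ᵀ := by
  have hinv : ∀ g, (P (σ g))ᵀ * (P (σ g⁻¹))ᵀ = 1 := fun g => by
    rw [← transpose_mul, ← map_mul, ← map_mul, inv_mul_cancel, map_one, map_one, transpose_one]
  refine ⟨fun hX g => ?_, fun hX g => ?_⟩
  · calc P g * X = P g * X * ((P (σ g))ᵀ * (P (σ g⁻¹))ᵀ) := by rw [hinv, Matrix.mul_one]
      _ = X * (P (σ g⁻¹))ᵀ := by rw [← Matrix.mul_assoc, ← twistedConj_apply, hX g]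
  · rw [twistedConj_apply, hX, Matrix.mul_assoc, ← transpose_mul, ← map_mul, ← map_mul,
      mul_inv_cancel, map_one, map_one, transpose_one, Matrix.mul_one]


variable {P σ}

lemma IsIrreducibleMatrixRep.finrank_invariants_twistedConj_le_one [IsAlgClosed K] [Nonempty ι]
    (hP : IsIrreducibleMatrixRep P) (σ : MulAut Γ) :
    finrank K (twistedConj P σ).invariants ≤ 1 := by
  by_cases h : ∃ Y ∈ (twistedConj P σ).invariants, Y ≠ 0
  · obtain ⟨Y, hY, hY0⟩ := h
    have hPY := (mem_invariants_twistedConj_iff P σ Y).mp hY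
    have hdet : IsUnit Y.det :=
      (isUnit_iff_isUnit_det Y).mp (hP.isUnit_of_mul_eq_mul _ hPY hY0)
    refine finrank_le_one ⟨Y, hY⟩ fun ⟨X, hX⟩ => ?_
    have hPX := (mem_invariants_twistedConj_iff P σ X).mp hX
    have hcomm : ∀ g, Commute (P g) (X * Y⁻¹) := fun g => by
      have hY' : Y⁻¹ * P g = (P (σ g⁻¹))ᵀ * Y⁻¹ := by
        rw [← nonsing_inv_mul_cancel_left Y ((P (σ g⁻¹))ᵀ * Y⁻¹) hdet, ← Matrix.mul_assoc Y,
          ← hPY g, Matrix.mul_assoc, mul_nonsing_inv Y hdet, Matrix.mul_one]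
      rw [Commute, SemiconjBy, ← Matrix.mul_assoc, hPX g, Matrix.mul_assoc, Matrix.mul_assoc, hY']
    obtain ⟨a, ha⟩ := hP.exists_eq_smul_one hcomm
    refine ⟨a, Subtype.ext ?_⟩
    change a • Y = X
    rw [← Matrix.one_mul Y, ← smul_mul_assoc, ← ha, nonsing_inv_mul_cancel_right Y X hdet]
  · simp only [not_exists, not_and, not_not] at h
    rw [(Submodule.eq_bot_iff _).mpr h, finrank_bot]
    exact zero_le_one

lemma trace_map_apply_eq_trace_inv_of_isUnit_mem_invariants {Y : Matrix ι ι K}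
    (hY : Y ∈ (twistedConj P σ).invariants) (hYu : IsUnit Y) (g : Γ) :
    (P (σ g)).trace = (P g⁻¹).trace := by
  have hdet : IsUnit Y.det := (isUnit_iff_isUnit_det Y).mp hYu
  have h := (mem_invariants_twistedConj_iff P σ Y).mp hY g⁻¹
  rw [inv_inv] at h
  rw [← trace_transpose, ← nonsing_inv_mul_cancel_left Y (P (σ g))ᵀ hdet, ← h, trace_mul_comm,
    Matrix.mul_assoc, mul_nonsing_inv Y hdet, Matrix.mul_one]

def twistedTranspose (S : Matrix ι ι K) : Module.End K (Matrix ι ι K) :=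
  LinearMap.mulRight K Sᵀ ∘ₗ (transposeLinearEquiv ι ι K K).toLinearMap

variable {S : Matrix ι ι K}

@[simp]
lemma twistedTranspose_apply (X : Matrix ι ι K) : twistedTranspose S X = Xᵀ * Sᵀ := rfl

lemma twistedTranspose_mul_twistedConj (hS : ∀ g, S * P g = P (σ (σ g)) * S) (g : Γ) :
    twistedTranspose S * twistedConj P σ g = twistedConj P σ (σ g) * twistedTranspose S := by
  ext X : 1
  simp only [Module.End.mul_apply, twistedTranspose_apply, twistedConj_apply, transpose_mul,
    transpose_transpose, Matrix.mul_assoc]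
  rw [← transpose_mul, hS g, transpose_mul]

lemma twistedTranspose_pow_two_mul {m : ℕ} (hSm : S ^ m = 1) :
    twistedTranspose S ^ (2 * m) = 1 := by
  have hsq : twistedTranspose S ^ 2 = LinearMap.mulLeft K S * LinearMap.mulRight K Sᵀ := by
    ext X : 1
    simp [pow_two, Matrix.mul_assoc]
  rw [pow_mul, hsq, (LinearMap.commute_mulLeft_right S Sᵀ).mul_pow, LinearMap.pow_mulLeft,
    LinearMap.pow_mulRight, ← transpose_pow, hSm, transpose_one, LinearMap.mulLeft_one,
    LinearMap.mulRight_one, ← Module.End.one_eq_id, mul_one]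

end TwistedConjugation

section TwistedIndicator

variable {Γ ι : Type*} [Group Γ] [Fintype Γ] [Fintype ι] [DecidableEq ι]
  {P : Γ →* Matrix ι ι ℂ} {σ : MulAut Γ} {S : Matrix ι ι ℂ}

lemma finrank_invariants_twistedConj_ne_zero [Nonempty ι]
    (h : ∀ g, (P (σ g)).trace = star (P g).trace) :
    finrank ℂ (twistedConj P σ).invariants ≠ 0 := by
  let _ : Invertible (Fintype.card Γ : ℂ) := invertibleOfNonzero (by simp)
  have htrace := (twistedConj P σ).isProj_averageMap.trace
  rw [Representation.averageMap_eq_smul_sum, map_smul, map_sum] at htrace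
  simp_rw [trace_twistedConj, h, Complex.star_def, Complex.mul_conj, ← Complex.ofReal_sum] at htrace
  intro h0
  rw [h0, Nat.cast_zero, smul_eq_zero, Complex.ofReal_eq_zero] at htrace
  refine htrace.elim (by simp) (Finset.sum_pos' (fun g _ => Complex.normSq_nonneg _)
    ⟨1, Finset.mem_univ _, ?_⟩).ne'
  simp

variable (P σ S) in
noncomputable def twistedIndicator : ℂ :=
  (Fintype.card Γ : ℂ)⁻¹ * ∑ g, (P g * P (σ g) * S).trace

lemma twistedIndicator_eq_trace [Invertible (Fintype.card Γ : ℂ)] :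
    twistedIndicator P σ S =
      LinearMap.trace ℂ _ ((twistedConj P σ).averageMap * twistedTranspose S) := by
  rw [Representation.averageMap_eq_smul_sum, smul_mul_assoc, Finset.sum_mul, map_smul, map_sum,
    invOf_eq_inv, smul_eq_mul, twistedIndicator]
  congr 1
  refine Finset.sum_congr rfl fun g _ => ?_
  have hcomp : twistedConj P σ g * twistedTranspose S = LinearMap.mulLeft ℂ (P g) ∘ₗ
      LinearMap.mulRight ℂ (Sᵀ * (P (σ g))ᵀ) ∘ₗ (transposeLinearEquiv ι ι ℂ ℂ).toLinearMap := by
    ext X : 1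
    simp [Matrix.mul_assoc]
  rw [hcomp, trace_mulLeft_comp_mulRight_comp_transpose, transpose_mul, transpose_transpose,
    transpose_transpose, Matrix.mul_assoc]

namespace IsIrreducibleMatrixRep

variable (hP : IsIrreducibleMatrixRep P)
include hP

theorem twistedIndicator_pow_eq_one [Nonempty ι] (hS : ∀ g, S * P g = P (σ (σ g)) * S) {m : ℕ}
    (hSm : S ^ m = 1) (h : ∀ g, (P (σ g)).trace = star (P g).trace) :
    twistedIndicator P σ S ^ (2 * m) = 1 := by
  let _ : Invertible (Fintype.card Γ : ℂ) := invertibleOfNonzero (by simp)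
  rw [twistedIndicator_eq_trace]
  exact (twistedConj P σ).isProj_averageMap.trace_mul_pow_eq_one
    ((hP.finrank_invariants_twistedConj_le_one σ).antisymm
      (Nat.one_le_iff_ne_zero.mpr (finrank_invariants_twistedConj_ne_zero h)))
    ((twistedConj P σ).commute_averageMap_of_mul_eq σ (twistedTranspose_mul_twistedConj hS))
    (twistedTranspose_pow_two_mul hSm)

theorem twistedIndicator_eq_zero (h : ¬ ∀ g, (P (σ g)).trace = star (P g).trace) :
    twistedIndicator P σ S = 0 := by
  let _ : Invertible (Fintype.card Γ : ℂ) := invertibleOfNonzero (by simp)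
  have hbot : (twistedConj P σ).invariants = ⊥ := by
    refine (Submodule.eq_bot_iff _).mpr fun Y hY => by_contra fun hY0 => h ?_
    intro g
    rw [trace_map_apply_eq_trace_inv_of_isUnit_mem_invariants hY
      (hP.isUnit_of_mul_eq_mul _ ((mem_invariants_twistedConj_iff P σ Y).mp hY) hY0),
      trace_map_inv_eq_star]
  have hzero : (twistedConj P σ).averageMap = 0 := by
    ext1 X
    simpa [hbot] using (twistedConj P σ).averageMap_invariant X
  rw [twistedIndicator_eq_trace, hzero, zero_mul, map_zero]

end IsIrreducibleMatrixRep

end TwistedIndicator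

section BasisTransport

variable {K Γ V ι : Type*} [Field K] [Group Γ] [Fintype ι] [DecidableEq ι] [AddCommGroup V]
  [Module K V]

noncomputable def matrixRep (b : Basis ι K V) (π : Γ →* (V ≃ₗ[K] V)) : Γ →* Matrix ι ι K :=
  (LinearMap.toMatrixAlgEquiv b : Module.End K V →* Matrix ι ι K).comp
    (LinearEquiv.automorphismGroup.toLinearMapMonoidHom.comp π)

lemma matrixRep_apply (b : Basis ι K V) (π : Γ →* (V ≃ₗ[K] V)) (g : Γ) :
    matrixRep b π g = LinearMap.toMatrixAlgEquiv b (π g) :=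
  rfl

lemma isIrreducibleMatrixRep_matrixRep (b : Basis ι K V) {π : Γ →* (V ≃ₗ[K] V)}
    (hπ : ∀ U : Submodule K V, (∀ g, ∀ v ∈ U, π g v ∈ U) → U = ⊥ ∨ U = ⊤) :
    IsIrreducibleMatrixRep (matrixRep b π) := by
  intro U hU
  have hcomap := hπ (U.comap b.equivFun.toLinearMap) fun g v hv => by
    simpa [matrixRep_apply, LinearMap.toMatrixAlgEquiv, LinearMap.toMatrix_mulVec_repr]
      using hU g _ hv
  simpa [← Submodule.orderIsoMapComap_symm_apply, map_eq_bot_iff, map_eq_top_iff] using hcomap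

end BasisTransport

theorem stmt1_general {Γ : Type*} [Group Γ] [Fintype Γ]
    {V : Type*} [AddCommGroup V] [Module ℂ V] [FiniteDimensional ℂ V] [Nontrivial V]
    (m : ℕ) (hm : 1 ≤ m)
    (σ : MulAut Γ)
    (π : Γ →* (V ≃ₗ[ℂ] V))
    (hirr : ∀ U : Submodule ℂ V, (∀ g : Γ, ∀ v ∈ U, π g v ∈ U) → U = ⊥ ∨ U = ⊤)
    (ξ : Γ → ℂ) (hξ : ∀ g, ξ g = LinearMap.trace ℂ V (π g).toLinearMap)
    (S : V ≃ₗ[ℂ] V)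
    (hS : ∀ (g : Γ) (v : V), S (π g v) = π ((σ ^ 2) g) (S v))
    (hSm : S ^ m = 1)
    (c : ℂ)
    (hc : c = (Fintype.card Γ : ℂ)⁻¹ * ∑ g : Γ,
      LinearMap.trace ℂ V ((π (g * σ g)).toLinearMap ∘ₗ S.toLinearMap)) :
    ((∀ g, ξ (σ g) = starRingEnd ℂ (ξ g)) → c ^ (2 * m) = 1 ∧ c ≠ 0) ∧
    (¬ (∀ g, ξ (σ g) = starRingEnd ℂ (ξ g)) → c = 0) := by
  let b := Module.finBasis ℂ V
  have : Nonempty (Fin (finrank ℂ V)) := ⟨⟨0, finrank_pos⟩⟩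
  let P := matrixRep b π
  let T := LinearMap.toMatrixAlgEquiv b S.toLinearMap
  have hξP : ∀ g, ξ g = (P g).trace := fun g => by
    rw [hξ, LinearMap.trace_eq_matrix_trace ℂ b]
    rfl
  have hTP : ∀ g, T * P g = P (σ (σ g)) * T := fun g => by
    simp only [T, P, matrixRep_apply, ← map_mul]
    exact congrArg _ (LinearMap.ext (hS g))
  have hTm : T ^ m = 1 := by
    rw [← map_pow, ← LinearEquiv.automorphismGroup.toLinearMapMonoidHom_apply, ← map_pow, hSm,
      map_one, map_one]
  have hcP : c = twistedIndicator P σ T := by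
    rw [hc, twistedIndicator]
    congr 1
    refine Finset.sum_congr rfl fun g _ => ?_
    rw [LinearMap.trace_eq_matrix_trace ℂ b, ← map_mul P]
    simp only [T, P, matrixRep_apply, ← map_mul]
    rfl
  have hP := isIrreducibleMatrixRep_matrixRep b hirr
  simp only [hξP, hcP, starRingEnd_apply]
  refine ⟨fun h => ?_, hP.twistedIndicator_eq_zero⟩
  have hpow := hP.twistedIndicator_pow_eq_one hTP hTm h
  exact ⟨hpow, ne_zero_pow (by omega) (hpow ▸ one_ne_zero)⟩

/-- Corollary 1.16(i) / Theorem 1.14(ii), finite-group content: the twisted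
Frobenius–Schur indicator `c = c_2^{(m)}(ξ̃)` is a `2m`-th root of unity if
`ξ ∘ σ = ξ̄`, and is `0` otherwise. -/
theorem stmt1 {Γ : Type*} [Group Γ] [Fintype Γ]
    {V : Type*} [AddCommGroup V] [Module ℂ V] [FiniteDimensional ℂ V] [Nontrivial V]
    (m : ℕ) (hm : 1 ≤ m)
    (σ : MulAut Γ) (hσ : σ ^ (2 * m) = 1)
    (π : Γ →* (V ≃ₗ[ℂ] V))
    (hirr : ∀ U : Submodule ℂ V, (∀ g : Γ, ∀ v ∈ U, π g v ∈ U) → U = ⊥ ∨ U = ⊤)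
    (ξ : Γ → ℂ) (hξ : ∀ g, ξ g = LinearMap.trace ℂ V (π g).toLinearMap)
    (S : V ≃ₗ[ℂ] V)
    (hS : ∀ (g : Γ) (v : V), S (π g v) = π ((σ ^ 2) g) (S v))
    (hSm : S ^ m = 1)
    (c : ℂ)
    (hc : c = (Fintype.card Γ : ℂ)⁻¹ * ∑ g : Γ,
      LinearMap.trace ℂ V ((π (g * σ g)).toLinearMap ∘ₗ S.toLinearMap)) :
    ((∀ g, ξ (σ g) = starRingEnd ℂ (ξ g)) → c ^ (2 * m) = 1 ∧ c ≠ 0) ∧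
    (¬ (∀ g, ξ (σ g) = starRingEnd ℂ (ξ g)) → c = 0) :=
  stmt1_general m hm σ π hirr ξ hξ S hS hSm c hc
end

section
/- Let Γ be a group, φ an automorphism of Γ, r ≥ 1 an integer, and let φ' be the automorphism of Γ^r defined by φ'(g₁,…,g_r) = (φ(g_r), φ(g₁),…,φ(g_{r−1})). Then: (i) for x, y ∈ Γ, x and y are φ^r-twisted conjugate in Γ if and only if (x,1,…,1) and (y,1,…,1) are φ'-twisted conjugate in Γ^r; (ii) every element of Γ^r is φ'-twisted conjugate to an element of the form (x,1,…,1). Consequently, x ↦ (x,1,…,1) induces a bijection between the set of φ^r-twisted conjugacy classes of Γ and the set of φ'-twisted conjugacy classes of Γ^r. -/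
/-- `a` and `b` are `ψ`-twisted conjugate: there is `z` with `b = z⁻¹ · a · ψ(z)`. -/
def TwistedConj {G : Type*} [Group G] (ψ : G → G) (a b : G) : Prop :=
  ∃ z : G, b = z⁻¹ * a * ψ z

lemma fin_sub_one_val {r : ℕ} [NeZero r] (i : Fin r) :
    ((i - 1 : Fin r) : ℕ) = if (i : ℕ) = 0 then r - 1 else (i : ℕ) - 1 := by
  have hr := Nat.pos_of_ne_zero (NeZero.ne r)
  rw [Fin.sub_def]
  have h1 : ((1 : Fin r) : ℕ) = 1 % r := rfl
  rw [h1]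
  have hi := i.isLt
  rcases Nat.lt_or_ge 1 r with h2 | h2
  · rw [Nat.mod_eq_of_lt h2]
    by_cases h : (i : ℕ) = 0
    · simp [h, Nat.mod_eq_of_lt (show r - 1 < r by omega)]
    · simp [h]
      have h3 : (i : ℕ) + (r - 1) = ((i:ℕ) - 1) + r := by omega
      rw [Nat.add_comm (r-1), h3, Nat.add_mod_right, Nat.mod_eq_of_lt (by omega)]
  · have hr1 : r = 1 := by omega
    have h0 : (i : ℕ) = 0 := by omega
    simp [h0, hr1]

lemma tc_refl {G : Type*} [Group G] (ψ : MulAut G) (a : G) : TwistedConj ⇑ψ a a :=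
  ⟨1, by simp⟩

lemma tc_symm {G : Type*} [Group G] (ψ : MulAut G) {a b : G}
    (h : TwistedConj ⇑ψ a b) : TwistedConj ⇑ψ b a := by
  obtain ⟨z, rfl⟩ := h
  exact ⟨z⁻¹, by simp [map_inv]; group⟩

lemma tc_trans {G : Type*} [Group G] (ψ : MulAut G) {a b c : G}
    (h1 : TwistedConj ⇑ψ a b) (h2 : TwistedConj ⇑ψ b c) : TwistedConj ⇑ψ a c := by
  obtain ⟨z, rfl⟩ := h1
  obtain ⟨w, rfl⟩ := h2
  exact ⟨z * w, by simp [map_mul]; group⟩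

lemma pow_step {Γ : Type*} [Group Γ] (φ : MulAut Γ) (m : ℕ) (z : Γ) :
    φ ((φ ^ m) z) = (φ ^ (m + 1)) z := by
  rw [pow_succ']; rfl

/-- Lemma 1.3: `x ↦ (x,1,…,1)` induces a bijection between the `φ^r`-twisted
conjugacy classes of `Γ` and the `φ'`-twisted conjugacy classes of `Γ^r`, where
`φ'` is the `φ`-twisted cyclic shift. -/
theorem stmt6 {Γ : Type*} [Group Γ] (φ : MulAut Γ) (r : ℕ) [NeZero r]
    (φ' : MulAut (Fin r → Γ)) (hφ' : ∀ (g : Fin r → Γ) (i : Fin r), φ' g i = φ (g (i - 1))) :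
    (∀ x y : Γ, TwistedConj (⇑(φ ^ r)) x y ↔
      TwistedConj (⇑φ') (fun i => if i = 0 then x else 1) (fun i => if i = 0 then y else 1)) ∧
    (∀ g : Fin r → Γ, ∃ x : Γ, TwistedConj (⇑φ') g (fun i => if i = 0 then x else 1)) ∧
    (∃ b : Quot (TwistedConj (⇑(φ ^ r))) ≃ Quot (TwistedConj (⇑φ')),
      ∀ x : Γ, b (Quot.mk _ x) = Quot.mk _ (fun i => if i = 0 then x else 1)) := by
  have hr := Nat.pos_of_ne_zero (NeZero.ne r)
  have hzero : ((0 : Fin r) : ℕ) = 0 := rfl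
  have hsub0 : ((0 - 1 : Fin r) : ℕ) = r - 1 := by rw [fin_sub_one_val]; simp
  -- Part (i)
  have part1 : ∀ x y : Γ, TwistedConj (⇑(φ ^ r)) x y ↔
      TwistedConj (⇑φ') (fun i => if i = 0 then x else 1) (fun i => if i = 0 then y else 1) := by
    intro x y
    constructor
    · rintro ⟨z, rfl⟩
      refine ⟨fun i => (φ ^ (i : ℕ)) z, ?_⟩
      funext i
      simp only [Pi.mul_apply, Pi.inv_apply, hφ']
      by_cases h : i = 0
      · subst h
        simp only [hzero, hsub0, pow_zero, MulAut.one_apply]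
        rw [pow_step, Nat.sub_add_cancel hr]
        simp [mul_assoc]
      · have hv : (i : ℕ) ≠ 0 := fun hc => h (Fin.ext hc)
        rw [if_neg h, if_neg h]
        have : ((i - 1 : Fin r) : ℕ) = (i : ℕ) - 1 := by rw [fin_sub_one_val, if_neg hv]
        rw [this, pow_step, Nat.sub_add_cancel (Nat.pos_of_ne_zero hv)]
        simp
    · rintro ⟨z', hz'⟩
      have h : ∀ i : Fin r, (if i = 0 then y else 1) =
          (z' i)⁻¹ * (if i = 0 then x else 1) * φ (z' (i - 1)) := by
        intro i
        have := congrFun hz' i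
        simpa [Pi.mul_apply, Pi.inv_apply, hφ'] using this
      have key : ∀ n (hn : n < r), z' ⟨n, hn⟩ = (φ ^ n) (z' 0) := by
        intro n
        induction n with
        | zero => intro hn; simp [show (⟨0, hn⟩ : Fin r) = 0 from rfl]
        | succ m ih =>
          intro hn
          have hm : m < r := Nat.lt_of_succ_lt hn
          set i : Fin r := ⟨m + 1, hn⟩ with hi
          have hne : i ≠ 0 := by
            intro hc
            have : ((i : ℕ)) = 0 := by rw [hc]; rfl
            simp [hi] at this
          have hsub : i - 1 = ⟨m, hm⟩ := by
            apply Fin.ext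
            rw [fin_sub_one_val]
            simp [hi]
          have := h i
          rw [if_neg hne, if_neg hne, mul_one] at this
          have hz : z' i = φ (z' (i - 1)) := by
            rw [eq_comm, inv_mul_eq_one (a := z' i)] at this
            exact this
          rw [hz, hsub, ih hm, pow_step]
      refine ⟨z' 0, ?_⟩
      have h0 := h 0
      rw [if_pos rfl, if_pos rfl] at h0
      have hlast : z' (0 - 1) = (φ ^ (r - 1)) (z' 0) := by
        have : (0 - 1 : Fin r) = ⟨r - 1, by omega⟩ := Fin.ext hsub0
        rw [this, key (r - 1) (by omega)]
      rw [hlast, pow_step, Nat.sub_add_cancel hr] at h0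
      exact h0
  -- Part (ii)
  have part2 : ∀ g : Fin r → Γ, ∃ x : Γ,
      TwistedConj (⇑φ') g (fun i => if i = 0 then x else 1) := by
    intro g
    set w : ℕ → Γ := fun n => Nat.rec 1 (fun m ih => g ⟨(m + 1) % r, Nat.mod_lt _ hr⟩ * φ ih) n
      with hw
    refine ⟨g 0 * φ (w (r - 1)), fun i => w (i : ℕ), ?_⟩
    funext i
    simp only [Pi.mul_apply, Pi.inv_apply, hφ']
    by_cases h : i = 0
    · subst h
      rw [if_pos rfl, hzero, hsub0]
      show g 0 * φ (w (r - 1)) = (w 0)⁻¹ * g 0 * φ (w (r - 1))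
      simp [hw]
    · have hv : (i : ℕ) ≠ 0 := fun hc => h (Fin.ext hc)
      rw [if_neg h]
      obtain ⟨m, hm⟩ := Nat.exists_eq_succ_of_ne_zero hv
      have hmr : m + 1 < r := by have := i.isLt; omega
      have hsub : ((i - 1 : Fin r) : ℕ) = m := by
        rw [fin_sub_one_val, if_neg hv, hm]
        omega
      have hwi : w (i : ℕ) = g i * φ (w m) := by
        conv_lhs => rw [hm]
        show g ⟨(m + 1) % r, Nat.mod_lt _ hr⟩ * φ (w m) = g i * φ (w m)
        congr 2
        apply Fin.ext
        show (m + 1) % r = (i : ℕ)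
        rw [Nat.mod_eq_of_lt hmr, hm]
      rw [hwi, hsub]
      group
  refine ⟨part1, part2, ?_⟩
  -- Part (iii)
  set R₁ := TwistedConj (⇑(φ ^ r))
  set R₂ := TwistedConj (⇑φ')
  set e : Γ → Fin r → Γ := fun x i => if i = 0 then x else 1 with he
  have f : Quot R₁ → Quot R₂ :=
    Quot.map e (fun a b hab => (part1 a b).mp hab)
  set ch : (Fin r → Γ) → Γ := fun v => Classical.choose (part2 v) with hch
  have chspec : ∀ v, R₂ v (e (ch v)) := fun v => Classical.choose_spec (part2 v)
  have gmap : Quot R₂ → Quot R₁ := by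
    refine Quot.lift (fun v => Quot.mk R₁ (ch v)) ?_
    intro v u hvu
    apply Quot.sound
    apply (part1 _ _).mpr
    exact tc_trans φ' (tc_symm φ' (chspec v)) (tc_trans φ' hvu (chspec u))
  refine ⟨⟨Quot.map e (fun a b hab => (part1 a b).mp hab),
    Quot.lift (fun v => Quot.mk R₁ (ch v))
      (fun v u hvu => Quot.sound ((part1 _ _).mpr
        (tc_trans φ' (tc_symm φ' (chspec v)) (tc_trans φ' hvu (chspec u))))),
    ?_, ?_⟩, ?_⟩
  · intro q
    induction q using Quot.ind with
    | _ x =>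
      show Quot.mk R₁ (ch (e x)) = Quot.mk R₁ x
      exact Quot.sound ((part1 _ _).mpr (tc_symm φ' (chspec (e x))))
  · intro q
    induction q using Quot.ind with
    | _ v =>
      show Quot.mk R₂ (e (ch v)) = Quot.mk R₂ v
      exact Quot.sound (tc_symm φ' (chspec v))
  · intro x
    rfl
end

section
/- Let Γ be a group, φ an automorphism of Γ, r ≥ 1 an integer, and let φ' be the automorphism of Γ^r defined by φ'(g₁,…,g_r) = (φ(g_r), φ(g₁),…,φ(g_{r−1})). For k ≥ 1 put N_k(x) = x·φ(x)·φ²(x)⋯φ^{k−1}(x), with N₀(x) = 1. Then for every x ∈ Γ, setting y = (1, N₁(x), N₂(x), …, N_{r−1}(x)) ∈ Γ^r, one has y⁻¹·(x, x, …, x)·φ'(y) = (N_r(x), 1, …, 1). In particular, the diagonal element (x,…,x) is φ'-twisted conjugate to (N_r(x),1,…,1) in Γ^r. -/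
/-- The identity establishing the commutative diagram (1.4.1): with
`y = (1, N₁(x), …, N_{r−1}(x))` one has `y⁻¹ · (x,…,x) · φ'(y) = (N_r(x), 1, …, 1)`;
in particular the diagonal element `(x,…,x)` is `φ'`-twisted conjugate to
`(N_r(x), 1, …, 1)`. -/
theorem stmt7 {Γ : Type*} [Group Γ] (φ : MulAut Γ) (r : ℕ) [NeZero r]
    (φ' : MulAut (Fin r → Γ)) (hφ' : ∀ (g : Fin r → Γ) (i : Fin r), φ' g i = φ (g (i - 1)))
    (N : ℕ → Γ → Γ) (hN : ∀ (k : ℕ) (x : Γ), N k x = ((List.range k).map fun j => (φ ^ j) x).prod)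
    (x : Γ) :
    ((fun i : Fin r => N (i : ℕ) x)⁻¹ * (fun _ : Fin r => x) *
        φ' (fun i : Fin r => N (i : ℕ) x)) =
      (fun i : Fin r => if i = 0 then N r x else 1) ∧
    TwistedConj (⇑φ') (fun _ : Fin r => x) (fun i : Fin r => if i = 0 then N r x else 1) := by
  obtain ⟨m, rfl⟩ := Nat.exists_eq_succ_of_ne_zero (NeZero.ne r)
  have key : ∀ k : ℕ, x * φ (N k x) = N (k + 1) x := by
    intro k
    rw [hN, hN, List.range_succ_eq_map, List.map_cons, List.prod_cons, pow_zero]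
    congr 1
    rw [map_list_prod φ, List.map_map, List.map_map]
    congr 1
    refine List.map_congr_left fun j _ => ?_
    simp only [Function.comp_apply]
    rw [show Nat.succ j = j + 1 from rfl, pow_succ', MulAut.mul_apply]
  have main : ((fun i : Fin (m + 1) => N (i : ℕ) x)⁻¹ * (fun _ : Fin (m + 1) => x) *
        φ' (fun i : Fin (m + 1) => N (i : ℕ) x)) =
      (fun i : Fin (m + 1) => if i = 0 then N (m + 1) x else 1) := by
    funext i
    simp only [Pi.mul_apply, Pi.inv_apply, hφ']
    by_cases h : i = 0
    · subst h
      have h1 : (((0 : Fin (m + 1)) - 1 : Fin (m + 1)) : ℕ) = m := by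
        rw [Fin.coe_sub_one, if_pos rfl]
      have h0 : N 0 x = 1 := by simp [hN]
      rw [if_pos rfl, Fin.val_zero, h1, h0, mul_assoc, key, inv_one, one_mul]
    · have h1 : ((i - 1 : Fin (m + 1)) : ℕ) = (i : ℕ) - 1 := by
        rw [Fin.coe_sub_one, if_neg h]
      have h2 : ((i : ℕ) - 1) + 1 = (i : ℕ) :=
        Nat.succ_pred_eq_of_pos (Nat.pos_of_ne_zero (fun hh => h (Fin.ext hh)))
      rw [if_neg h, h1, mul_assoc, key, h2, inv_mul_cancel]
  exact ⟨main, ⟨_, main.symm⟩⟩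
end

section
/- Let k be a field, r ≥ 1 an integer, and V₁,…,V_r finite-dimensional k-vector spaces. Let T_i : V_i → V_{i+1} be linear maps for 1 ≤ i ≤ r (with V_{r+1} = V₁), and let g : V₁ → V₁ be a linear map. Let Φ be the linear endomorphism of V₁ ⊗ V₂ ⊗ ⋯ ⊗ V_r determined by Φ(v₁ ⊗ v₂ ⊗ ⋯ ⊗ v_r) = g(T_r(v_r)) ⊗ T₁(v₁) ⊗ T₂(v₂) ⊗ ⋯ ⊗ T_{r−1}(v_{r−1}). Then Tr(Φ) = Tr(g ∘ T_r ∘ T_{r−1} ∘ ⋯ ∘ T₁ : V₁ → V₁). -/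
/-! With `A i = G (i + 1) ∘ T i`, the diagonal entry of `Φ` in the tensor basis at a multi-index
`f` is `∏ i, ⟨f (i + 1), A i (f i)⟩`, so `Tr Φ` is a sum over closed paths
`f 0 → f 1 → ⋯ → f (r - 1) → f 0` of products of matrix entries of the `A i`. Expanding
`A (r - 1) ∘ ⋯ ∘ A 0` one factor at a time gives the same path sum for the trace of the composite
on `V 0`. -/

universe u v

open PiTensorProduct Module

theorem apply_eq_cast_iff {R ι : Type*} [Semiring R] {W : ι → Type*} [∀ i, AddCommMonoid (W i)]
    [∀ i, Module R (W i)] {i j : ι} (h : i = j) (u : ∀ i, W i) (x : W i) :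
    u j = LinearEquiv.cast (R := R) h x ↔ u i = x := by
  subst h
  rfl

section LinearChain

variable {k : Type u} [CommSemiring k]

def linearChain : {n : ℕ} → {V : Fin (n + 1) → Type v} → [∀ i, AddCommMonoid (V i)] →
    [∀ i, Module k (V i)] → (∀ i : Fin n, V i.castSucc →ₗ[k] V i.succ) → V 0 → ∀ i, V i
  | 0, _, _, _, _, v => Fin.cons v finZeroElim
  | _ + 1, _, _, _, A, v => Fin.cons v (linearChain (fun i => A i.succ) (A 0 v))

variable {n : ℕ} {V : Fin (n + 1) → Type v} [∀ i, AddCommMonoid (V i)] [∀ i, Module k (V i)]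

@[simp]
theorem linearChain_zero (A : ∀ i : Fin n, V i.castSucc →ₗ[k] V i.succ) (v : V 0) :
    linearChain A v 0 = v := by
  cases n <;> rfl

theorem linearChain_succ (A : ∀ i : Fin n, V i.castSucc →ₗ[k] V i.succ) (v : V 0) (i : Fin n) :
    linearChain A v i.succ = A i (linearChain A v i.castSucc) := by
  induction n with
  | zero => exact i.elim0
  | succ n ih =>
    cases i using Fin.cases with
    | zero => exact linearChain_zero (V := fun i => V i.succ) _ _
    | succ i => exact ih (V := fun i => V i.succ) _ _ i

theorem Module.Basis.sum_repr_mul_repr_apply {ι ι' M M' : Type*} [Fintype ι]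
    [AddCommMonoid M] [Module k M] [AddCommMonoid M'] [Module k M']
    (b : Basis ι k M) (b' : Basis ι' k M') (f : M →ₗ[k] M') (x : M) (j : ι') :
    ∑ i, b.repr x i * b'.repr (f (b i)) j = b'.repr (f x) j := by
  conv_rhs => rw [← b.sum_repr x]
  simp only [map_sum, map_smul, Finsupp.coe_finsetSum, Finset.sum_apply, Finsupp.smul_apply,
    smul_eq_mul]

theorem linearChain_last_eq_sum {ι : Fin (n + 1) → Type*} [∀ i, Fintype (ι i)]
    (b : ∀ i, Basis (ι i) k (V i)) (A : ∀ i : Fin n, V i.castSucc →ₗ[k] V i.succ) (v : V 0) :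
    linearChain A v (Fin.last n) = ∑ f : ∀ i, ι i,
      ((b 0).repr v (f 0) *
        ∏ i : Fin n, (b i.succ).repr (A i (b i.castSucc (f i.castSucc))) (f i.succ)) •
        b (Fin.last n) (f (Fin.last n)) := by
  induction n with
  | zero =>
    rw [← (Fin.consEquiv ι).sum_comp, Fintype.sum_prod_type]
    simp
  | succ n ih =>
    rw [← (Fin.consEquiv ι).sum_comp, Fintype.sum_prod_type, Finset.sum_comm]
    change linearChain (V := fun i => V i.succ) (fun i => A i.succ) (A 0 v) (Fin.last n) = _
    rw [ih (fun i => b i.succ)]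
    refine Finset.sum_congr rfl fun g _ => ?_
    simp only [Fin.consEquiv_apply, Fin.prod_univ_succ, ← Fin.succ_castSucc, ← Fin.succ_last,
      Fin.cons_succ]
    rw [← (b (Fin.castSucc 0)).sum_repr_mul_repr_apply (b (Fin.succ 0)) (A 0) v, Finset.sum_mul,
      Finset.sum_smul]
    refine Finset.sum_congr rfl fun x _ => ?_
    rw [mul_assoc]
    rfl

theorem trace_cons_tprod_eq_trace_linearChain [∀ i, Module.Free k (V i)]
    [∀ i, Module.Finite k (V i)] (A : ∀ i : Fin n, V i.castSucc →ₗ[k] V i.succ)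
    (Z : V (Fin.last n) →ₗ[k] V 0) (Φ : PiTensorProduct k V →ₗ[k] PiTensorProduct k V)
    (hΦ : ∀ v, Φ (tprod k v) = tprod k (Fin.cons (Z (v (Fin.last n))) fun i => A i (v i.castSucc)))
    (C : V 0 →ₗ[k] V 0) (hC : ∀ v, C v = Z (linearChain A v (Fin.last n))) :
    LinearMap.trace k _ Φ = LinearMap.trace k _ C := by
  classical
  let b i := Free.chooseBasis k (V i)
  rw [LinearMap.trace_eq_matrix_trace k (Basis.piTensorProduct b),
    LinearMap.trace_eq_matrix_trace k (b 0)]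
  simp only [Matrix.trace, Matrix.diag_apply, LinearMap.toMatrix_apply,
    Basis.piTensorProduct_apply, hΦ, Basis.piTensorProduct_repr_tprod_apply, Fin.prod_univ_succ,
    Fin.cons_zero, Fin.cons_succ, hC, linearChain_last_eq_sum b, map_sum, map_smul,
    Finsupp.coe_finsetSum, Finset.sum_apply, Finsupp.smul_apply, Basis.repr_self,
    Finsupp.single_apply, smul_eq_mul, ite_mul, one_mul, zero_mul]
  rw [Finset.sum_comm]
  simp only [Finset.sum_ite_eq', Finset.mem_univ, if_true]
  exact Finset.sum_congr rfl fun f _ => mul_comm _ _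

end LinearChain

section Cyclic

variable {k : Type u} [CommSemiring k] {n : ℕ} {V : Fin (n + 1) → Type v}
  [∀ i, AddCommMonoid (V i)] [∀ i, Module k (V i)]

-- Cutting the cycle at `Fin.last n → 0`: all transports between the fibres of `V` happen here.
def openSteps (A : ∀ i : Fin (n + 1), V i →ₗ[k] V (i + 1)) (i : Fin n) :
    V i.castSucc →ₗ[k] V i.succ :=
  (LinearEquiv.cast Fin.coeSucc_eq_succ).toLinearMap ∘ₗ A i.castSucc

def wrapStep (A : ∀ i : Fin (n + 1), V i →ₗ[k] V (i + 1)) : V (Fin.last n) →ₗ[k] V 0 :=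
  (LinearEquiv.cast (Fin.last_add_one n)).toLinearMap ∘ₗ A (Fin.last n)

theorem cons_wrapStep_openSteps_add_one (A : ∀ i : Fin (n + 1), V i →ₗ[k] V (i + 1))
    (v : ∀ i, V i) (i : Fin (n + 1)) :
    (Fin.cons (wrapStep A (v (Fin.last n))) fun j => openSteps A j (v j.castSucc) : ∀ i, V i)
      (i + 1) = A i (v i) := by
  cases i using Fin.lastCases with
  | last => exact (apply_eq_cast_iff (R := k) (Fin.last_add_one n) _ _).1 (Fin.cons_zero _ _)
  | cast j => exact (apply_eq_cast_iff (R := k) Fin.coeSucc_eq_succ _ _).1 (Fin.cons_succ _ _ _)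

theorem trace_eq_trace_of_tprod_shift [∀ i, Module.Free k (V i)] [∀ i, Module.Finite k (V i)]
    (A : ∀ i : Fin (n + 1), V i →ₗ[k] V (i + 1))
    (Φ : PiTensorProduct k V →ₗ[k] PiTensorProduct k V)
    (hΦ : ∀ v u : ∀ i, V i, (∀ i, u (i + 1) = A i (v i)) → Φ (tprod k v) = tprod k u)
    (C : V 0 →ₗ[k] V 0)
    (hC : ∀ s u : ∀ i, V i, (∀ j, j ≠ 0 → s j = u j) → (∀ i, u (i + 1) = A i (s i)) →
      C (s 0) = u 0) :
    LinearMap.trace k _ Φ = LinearMap.trace k _ C := by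
  refine trace_cons_tprod_eq_trace_linearChain (openSteps A) (wrapStep A) Φ
    (fun v => hΦ _ _ (cons_wrapStep_openSteps_add_one A v)) C fun v => ?_
  have hs := hC (linearChain (openSteps A) v) _ ?_ (cons_wrapStep_openSteps_add_one A _)
  · simpa using hs
  · intro j hj
    cases j using Fin.cases with
    | zero => exact absurd rfl hj
    | succ j => rw [Fin.cons_succ, linearChain_succ]

end Cyclic

theorem stmt9_general {k : Type*} [Field k] (r : ℕ) [NeZero r]
    (V : Fin r → Type*) [∀ i, AddCommGroup (V i)] [∀ i, Module k (V i)]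
    [∀ i, FiniteDimensional k (V i)]
    (T : (i : Fin r) → V i →ₗ[k] V (i + 1))
    (G : (i : Fin r) → V i →ₗ[k] V i)
    (Φ : PiTensorProduct k V →ₗ[k] PiTensorProduct k V)
    (hΦ : ∀ v u : (i : Fin r) → V i,
      (∀ i : Fin r, u (i + 1) = G (i + 1) (T i (v i))) →
      Φ (PiTensorProduct.tprod k v) = PiTensorProduct.tprod k u)
    (C : V 0 →ₗ[k] V 0)
    (hC : ∀ s u : (i : Fin r) → V i,
      (∀ j : Fin r, j ≠ 0 → s j = u j) →
      (∀ i : Fin r, u (i + 1) = G (i + 1) (T i (s i))) →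
      C (s 0) = u 0) :
    LinearMap.trace k (PiTensorProduct k V) Φ = LinearMap.trace k (V 0) C := by
  obtain _ | n := r
  · exact absurd rfl (NeZero.ne 0)
  · exact trace_eq_trace_of_tprod_shift (fun i => G (i + 1) ∘ₗ T i) Φ hΦ C hC

/-- Lemma 1.7 (linear-algebra content): the trace of the cyclically-shifted tensor
map `Φ : v₁ ⊗ ⋯ ⊗ v_r ↦ g(T_r v_r) ⊗ T₁ v₁ ⊗ ⋯ ⊗ T_{r−1} v_{r−1}` on
`V₁ ⊗ ⋯ ⊗ V_r` equals the trace of `g ∘ T_r ∘ ⋯ ∘ T₁` on `V₁`.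
Here (0-indexed) `G i` is `g` at `i = 0` and the identity otherwise, `Φ` is
characterized on pure tensors, and `C` is characterized as the once-around-the-cycle
composite `g ∘ T_{r−1} ∘ ⋯ ∘ T₀`. -/
theorem stmt9 {k : Type*} [Field k] (r : ℕ) [NeZero r]
    (V : Fin r → Type*) [∀ i, AddCommGroup (V i)] [∀ i, Module k (V i)]
    [∀ i, FiniteDimensional k (V i)]
    (T : (i : Fin r) → V i →ₗ[k] V (i + 1))
    (g : V 0 →ₗ[k] V 0)
    (G : (i : Fin r) → V i →ₗ[k] V i)
    (hG0 : G 0 = g) (hGi : ∀ i : Fin r, i ≠ 0 → G i = LinearMap.id)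
    (Φ : PiTensorProduct k V →ₗ[k] PiTensorProduct k V)
    (hΦ : ∀ v u : (i : Fin r) → V i,
      (∀ i : Fin r, u (i + 1) = G (i + 1) (T i (v i))) →
      Φ (PiTensorProduct.tprod k v) = PiTensorProduct.tprod k u)
    (C : V 0 →ₗ[k] V 0)
    (hC : ∀ s u : (i : Fin r) → V i,
      (∀ j : Fin r, j ≠ 0 → s j = u j) →
      (∀ i : Fin r, u (i + 1) = G (i + 1) (T i (s i))) →
      C (s 0) = u 0) :
    LinearMap.trace k (PiTensorProduct k V) Φ = LinearMap.trace k (V 0) C :=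
  stmt9_general r V T G Φ hΦ C hC
end

section
/- Let Γ be a group, σ an automorphism of Γ, r ≥ 1 an integer, π : Γ → GL(V) a finite-dimensional complex representation, and S : V → V a linear automorphism such that S ∘ π(h) ∘ S⁻¹ = π(σ^r(h)) for all h ∈ Γ. Then for every g ∈ Γ, the linear endomorphism of V^{⊗r} determined by v₁ ⊗ v₂ ⊗ ⋯ ⊗ v_r ↦ π(g)(S(v_r)) ⊗ π(σ⁻¹(g))(v₁) ⊗ π(σ⁻²(g))(v₂) ⊗ ⋯ ⊗ π(σ^{−(r−1)}(g))(v_{r−1}) has trace equal to Tr(π(g·σ(g)·σ²(g)⋯σ^{r−1}(g)) ∘ S). -/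
/-!
Choose a basis `b` of `V` and use the product basis of `V^{⊗r}`. Writing `A₀ = π(g) S` and
`Aⱼ = π(σ⁻ʲ g)` for `0 < j < r`, the diagonal entry of `Φ` at the multi-index `p` is
`∏ⱼ (Aⱼ)_{pⱼ, pⱼ₋₁}` (indices mod `r`), and summing these closed paths gives
`Tr(A₀ A_{r-1} ⋯ A₁)`. Moving `S` to the right through the twisted commutation
`S π(h) = π(σʳ h) S` turns `π(σ^{-(r-1)} g) ⋯ π(σ⁻¹ g)` into `π(σ g) ⋯ π(σ^{r-1} g)`.
-/

open Matrix Module PiTensorProduct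

theorem Matrix.trace_list_ofFn_prod_mul {ι R : Type*} [Fintype ι] [DecidableEq ι]
    [CommSemiring R] :
    ∀ {m : ℕ} (N : Fin m → Matrix ι ι R) (X : Matrix ι ι R),
      trace ((List.ofFn N).prod * X) =
        ∑ q : Fin (m + 1) → ι, (∏ k, N k (q k.castSucc) (q k.succ)) * X (q (Fin.last m)) (q 0)
  | 0, N, X => by
    simp only [List.ofFn_zero, List.prod_nil, one_mul, Finset.univ_eq_empty, Finset.prod_empty]
    exact (Fintype.sum_equiv (Equiv.funUnique (Fin 1) ι) _ _ fun q => by simp).symm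
  | m + 1, N, X => by
    rw [List.ofFn_succ', List.concat_eq_append, List.prod_append, List.prod_singleton,
      Matrix.mul_assoc, trace_list_ofFn_prod_mul]
    conv_rhs => rw [← (Fin.snocEquiv fun _ => ι).sum_comp, Fintype.sum_prod_type, Finset.sum_comm]
    refine Finset.sum_congr rfl fun q _ => ?_
    simp only [Matrix.mul_apply, Finset.mul_sum]
    refine Finset.sum_congr rfl fun x _ => ?_
    simp only [Fin.snocEquiv_apply, Fin.prod_univ_castSucc, Fin.snoc_castSucc, Fin.snoc_last,
      Fin.succ_castSucc, Fin.succ_last, mul_assoc]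
    rfl

theorem PiTensorProduct.trace_eq_trace_mul_reverse_prod {R V : Type*} [CommSemiring R]
    [AddCommMonoid V] [Module R V] [Module.Free R V] [Module.Finite R V] {m : ℕ}
    (A : Fin (m + 1) → Module.End R V)
    (Φ : Module.End R (PiTensorProduct R fun _ : Fin (m + 1) => V))
    (hΦ : ∀ v, Φ (tprod R v) = tprod R fun j => A j (v (j - 1))) :
    LinearMap.trace R _ Φ =
      LinearMap.trace R V (A 0 * (List.ofFn fun k : Fin m => A k.succ).reverse.prod) := by
  classical
  set b := Free.chooseBasis R V
  set M : Fin (m + 1) → Matrix _ _ R := fun j => LinearMap.toMatrixAlgEquiv b (A j)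
  have hentry : ∀ p, LinearMap.toMatrix (Basis.piTensorProduct fun _ => b)
      (Basis.piTensorProduct fun _ => b) Φ p p = ∏ j, M j (p j) (p (j - 1)) := by
    intro p
    simp [LinearMap.toMatrix_apply, LinearMap.toMatrixAlgEquiv_apply, hΦ, M]
  have hzero : (0 : Fin (m + 1)) - 1 = Fin.last m := by ext; simp
  have hsucc : ∀ k : Fin m, k.succ - 1 = k.castSucc := fun k => by
    ext; simp [Fin.coe_sub_one, Fin.succ_ne_zero]
  -- transposing turns the backward steps `p j ← p (j - 1)` into a forward path
  have hprod : LinearMap.toMatrix b b (A 0 * (List.ofFn fun k : Fin m => A k.succ).reverse.prod)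
      = M 0 * ((List.ofFn fun k : Fin m => (M k.succ)ᵀ).prod)ᵀ := by
    change LinearMap.toMatrixAlgEquiv b _ = _
    rw [map_mul, map_list_prod, Matrix.transpose_list_prod, List.map_ofFn, List.map_reverse,
      List.map_ofFn]
    simp only [Function.comp_def, Matrix.transpose_transpose, M]
  rw [LinearMap.trace_eq_matrix_trace R (Basis.piTensorProduct fun _ => b),
    LinearMap.trace_eq_matrix_trace R b, hprod, Matrix.trace, ← Matrix.trace_transpose,
    Matrix.transpose_mul, Matrix.transpose_transpose, Matrix.trace_list_ofFn_prod_mul]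
  refine Finset.sum_congr rfl fun p _ => ?_
  rw [Matrix.diag_apply, hentry, Fin.prod_univ_succ, hzero, mul_comm]
  simp only [hsucc, Matrix.transpose_apply]

theorem List.reverse_ofFn {α : Type*} {n : ℕ} (f : Fin n → α) :
    (List.ofFn f).reverse = List.ofFn fun i => f i.rev := by
  rw [List.ofFn_eq_map, ← List.map_reverse, List.finRange_reverse, List.map_map,
    ← List.ofFn_eq_map]
  rfl

theorem MulAut.pow_apply_inv_pow {Γ : Type*} [Group Γ] (σ : MulAut Γ) {n k : ℕ} (h : k ≤ n)
    (g : Γ) : (σ ^ n) ((σ⁻¹ ^ k) g) = (σ ^ (n - k)) g := by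
  rw [← MulAut.mul_apply, inv_pow, ← pow_sub σ h]

theorem MulAut.mul_pow_apply_reverse_prod {Γ : Type*} [Group Γ] (σ : MulAut Γ) (g : Γ) (m : ℕ) :
    g * (σ ^ (m + 1)) (List.ofFn fun k : Fin m => (σ⁻¹ ^ (k + 1 : ℕ)) g).reverse.prod =
      ((List.range (m + 1)).map fun i => (σ ^ i) g).prod := by
  rw [map_list_prod, List.map_reverse, List.map_ofFn, List.reverse_ofFn, List.range_succ_eq_map,
    List.map_cons, List.prod_cons, pow_zero, MulAut.one_apply, List.map_map]
  congr 2
  refine List.ext_getElem (by simp) fun i _ hi => ?_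
  replace hi : i < m := by simpa using hi
  simp only [List.getElem_ofFn, List.getElem_map, List.getElem_range, Fin.val_rev,
    Function.comp_apply]
  rw [MulAut.pow_apply_inv_pow σ (by omega)]
  congr 2
  omega

/-- 1.12: the character identity `π̃₀(gσ) = ξ̃(N_r(g)σ^r)`: the trace of the twisted
cyclic-shift endomorphism of `V^{⊗r}` determined by
`v₁ ⊗ ⋯ ⊗ v_r ↦ π(g)(S v_r) ⊗ π(σ⁻¹ g)(v₁) ⊗ ⋯ ⊗ π(σ^{−(r−1)} g)(v_{r−1})`
equals `Tr(π(g·σ(g)⋯σ^{r−1}(g)) ∘ S)`. -/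
theorem stmt10 {Γ : Type*} [Group Γ] (σ : MulAut Γ) (r : ℕ) [NeZero r]
    {V : Type*} [AddCommGroup V] [Module ℂ V] [FiniteDimensional ℂ V]
    (π : Γ →* (V ≃ₗ[ℂ] V))
    (S : V ≃ₗ[ℂ] V)
    (hS : ∀ (h : Γ) (v : V), S (π h v) = π ((σ ^ r) h) (S v))
    (g : Γ)
    (Φ : PiTensorProduct ℂ (fun _ : Fin r => V) →ₗ[ℂ]
        PiTensorProduct ℂ (fun _ : Fin r => V))
    (hΦ : ∀ v : Fin r → V,
      Φ (PiTensorProduct.tprod ℂ v) =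
        PiTensorProduct.tprod ℂ (fun j : Fin r =>
          if j = 0 then π g (S (v (j - 1))) else π ((σ⁻¹ ^ (j : ℕ)) g) (v (j - 1)))) :
    LinearMap.trace ℂ (PiTensorProduct ℂ (fun _ : Fin r => V)) Φ =
      LinearMap.trace ℂ V
        ((π (((List.range r).map fun i => (σ ^ i) g).prod)).toLinearMap ∘ₗ S.toLinearMap) := by
  obtain ⟨m, rfl⟩ : ∃ m, r = m + 1 := ⟨r - 1, (Nat.succ_pred_eq_of_ne_zero (NeZero.ne r)).symm⟩
  set toEnd := LinearEquiv.automorphismGroup.toLinearMapMonoidHom (R := ℂ) (M := V)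
  set B : Fin (m + 1) → V ≃ₗ[ℂ] V := fun j => if j = 0 then π g * S else π ((σ⁻¹ ^ (j : ℕ)) g)
  have hSπ : ∀ h, S * π h = π ((σ ^ (m + 1)) h) * S := fun h => LinearEquiv.ext (hS h)
  have hB : B 0 * (List.ofFn fun k : Fin m => B k.succ).reverse.prod =
      π (((List.range (m + 1)).map fun i => (σ ^ i) g).prod) * S := by
    simp only [B, ↓reduceIte, Fin.succ_ne_zero, Fin.val_succ]
    rw [← MulAut.mul_pow_apply_reverse_prod, map_mul, mul_assoc (π g) _ S, ← hSπ, ← mul_assoc,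
      map_list_prod, List.map_reverse, List.map_ofFn]
    rfl
  have hΦB : ∀ v, Φ (tprod ℂ v) = tprod ℂ fun j => toEnd (B j) (v (j - 1)) := fun v => by
    rw [hΦ]; congr; funext j; by_cases hj : j = 0 <;> simp [B, hj, toEnd]
  have hA : toEnd (B 0) * (List.ofFn fun k : Fin m => toEnd (B k.succ)).reverse.prod =
      toEnd (B 0 * (List.ofFn fun k : Fin m => B k.succ).reverse.prod) := by
    rw [map_mul, map_list_prod, List.map_reverse, List.map_ofFn]
    rfl
  rw [PiTensorProduct.trace_eq_trace_mul_reverse_prod (fun j => toEnd (B j)) Φ hΦB, hA, hB]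
  rfl
end

section
/- Let G̃ be a finite group, K ≤ G̃ a subgroup, and H a normal subgroup of K such that K/H is abelian. Suppose that for every group homomorphism θ : K → ℂˣ with H ⊆ ker θ there is given a group homomorphism θ̃ : G̃ → ℂˣ with θ̃|_K = θ. Then for every class function ξ : G̃ → ℂ, |H|⁻¹ · Σ_{x∈H} ξ(x) = Σ_θ ( |K|⁻¹ · Σ_{x∈K} ξ(x)·θ̃(x) ), where the outer sum runs over all homomorphisms θ : K → ℂˣ with H ⊆ ker θ. -/
namespace Stmt13Aux

open Finset

variable {Q : Type*} [CommGroup Q]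

/-- Group homomorphisms `Q →* ℂˣ` correspond to complex additive characters of `Additive Q`. -/
noncomputable def charEquiv : (Q →* ℂˣ) ≃ AddChar (Additive Q) ℂ where
  toFun θ :=
    { toFun := fun a => ((θ a.toMul : ℂˣ) : ℂ)
      map_zero_eq_one' := by simp
      map_add_eq_mul' := fun a b => by
        simp only [← Units.val_mul, ← map_mul]
        rfl }
  invFun ψ := MonoidHom.toHomUnits
    { toFun := fun q => ψ (Additive.ofMul q)
      map_one' := ψ.map_zero_eq_one
      map_mul' := fun a b => ψ.map_add_eq_mul a b }
  left_inv θ := by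
    ext q
    simp
  right_inv ψ := by
    ext a
    simp

noncomputable instance [Finite Q] : Fintype (Q →* ℂˣ) :=
  Fintype.ofEquiv _ (charEquiv (Q := Q)).symm

lemma sum_char [Fintype Q] [DecidableEq Q] (q : Q) :
    ∑ θ : Q →* ℂˣ, ((θ q : ℂˣ) : ℂ) = if q = 1 then (Fintype.card Q : ℂ) else 0 := by
  classical
  rw [← Equiv.sum_comp (charEquiv (Q := Q)).symm (fun θ => ((θ q : ℂˣ) : ℂ))]
  have h : ∀ ψ : AddChar (Additive Q) ℂ,
      (((charEquiv.symm ψ) q : ℂˣ) : ℂ) = ψ (Additive.ofMul q) := fun ψ => by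
    simp [charEquiv]
  simp_rw [h]
  rw [AddChar.sum_apply_eq_ite]
  have hcard : Fintype.card (Additive Q) = Fintype.card Q :=
    Fintype.card_congr Additive.toMul
  have hiff : (Additive.ofMul q = (0 : Additive Q)) ↔ q = 1 := by
    constructor <;> intro hh <;> exact hh
  rw [hcard]
  by_cases hq : q = 1
  · rw [if_pos (hiff.mpr hq), if_pos hq]
  · rw [if_neg (fun c => hq (hiff.mp c)), if_neg hq]

end Stmt13Aux

open Stmt13Aux Finset

/-- Lemma 4.2: for a class function `ξ` on a finite group `G̃`, a subgroup `K`, and a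
normal subgroup `H ⊴ K` with `K/H` abelian, given for each linear character `θ` of `K`
trivial on `H` an extension `θ̃` to `G̃`, one has
`|H|⁻¹ Σ_{x∈H} ξ(x) = Σ_θ |K|⁻¹ Σ_{x∈K} ξ(x)·θ̃(x)`. -/
theorem stmt13 {G : Type*} [Group G] [Fintype G]
    (K : Subgroup G) (H : Subgroup ↥K) [H.Normal]
    (habel : ∀ a b : ↥K, a * b * a⁻¹ * b⁻¹ ∈ H)
    (Θ : (↥K →* ℂˣ) → (G →* ℂˣ))
    (hΘ : ∀ θ : ↥K →* ℂˣ, (∀ x : ↥K, x ∈ H → θ x = 1) → ∀ x : ↥K, Θ θ (x : G) = θ x)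
    (ξ : G → ℂ) (hξ : ∀ g x : G, ξ (g * x * g⁻¹) = ξ x) :
    (Nat.card ↥H : ℂ)⁻¹ * (∑ᶠ x : ↥H, ξ (((x : ↥K) : G))) =
      ∑ᶠ (θ : ↥K →* ℂˣ) (_ : ∀ x : ↥K, x ∈ H → θ x = 1),
        (Nat.card ↥K : ℂ)⁻¹ * ∑ᶠ x : ↥K, ξ (x : G) * ((Θ θ (x : G) : ℂˣ) : ℂ) := by
  classical
  letI : Fintype ↥K := Fintype.ofFinite _
  letI : Fintype ↥H := Fintype.ofFinite _
  letI : CommGroup (↥K ⧸ H) :=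
    { (inferInstance : Group (↥K ⧸ H)) with
      mul_comm := fun a b => by
        induction a using QuotientGroup.induction_on with | H a =>
        induction b using QuotientGroup.induction_on with | H b =>
        rw [← QuotientGroup.mk_mul, ← QuotientGroup.mk_mul, QuotientGroup.eq]
        have h := habel b⁻¹ a⁻¹
        convert h using 1
        group }
  letI : Fintype (↥K ⧸ H) := Fintype.ofFinite _
  haveI : Finite (↥K →* ℂˣ) :=
    Finite.of_equiv _ (Abelianization.lift (G := ↥K) (A := ℂˣ)).symm
  letI : Fintype (↥K →* ℂˣ) := Fintype.ofFinite _
  set P : (↥K →* ℂˣ) → Prop := fun θ => ∀ x : ↥K, x ∈ H → θ x = 1 with hP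
  -- the equivalence between characters of the quotient and characters trivial on `H`
  let e2 : ((↥K ⧸ H) →* ℂˣ) ≃ {θ : ↥K →* ℂˣ // P θ} :=
    { toFun := fun φ => ⟨φ.comp (QuotientGroup.mk' H), fun x hx => by
        simp only [MonoidHom.comp_apply, QuotientGroup.mk'_apply]
        rw [(QuotientGroup.eq_one_iff x).mpr hx, map_one]⟩
      invFun := fun θp => QuotientGroup.lift H θp.1 (fun x hx => θp.2 x hx)
      left_inv := fun φ => MonoidHom.ext fun q => by
        induction q using QuotientGroup.induction_on with | H x => rfl
      right_inv := fun θp => Subtype.ext (by ext x; rfl) }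
  -- convert all finsums to finite sums
  rw [finsum_eq_sum_of_fintype]
  have hout : (∑ᶠ (θ : ↥K →* ℂˣ) (_ : P θ),
        (Nat.card ↥K : ℂ)⁻¹ * ∑ᶠ x : ↥K, ξ (x : G) * ((Θ θ (x : G) : ℂˣ) : ℂ)) =
      ∑ θ : ↥K →* ℂˣ, if P θ then
        (Nat.card ↥K : ℂ)⁻¹ * ∑ x : ↥K, ξ (x : G) * ((Θ θ (x : G) : ℂˣ) : ℂ) else 0 := by
    rw [finsum_eq_sum_of_fintype]
    refine Finset.sum_congr rfl fun θ _ => ?_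
    rw [finsum_eq_if, finsum_eq_sum_of_fintype]
  rw [hout]
  -- replace `Θ θ` by `θ` inside the sum, using the extension property
  have hstep1 : (∑ θ : ↥K →* ℂˣ, if P θ then
        (Nat.card ↥K : ℂ)⁻¹ * ∑ x : ↥K, ξ (x : G) * ((Θ θ (x : G) : ℂˣ) : ℂ) else 0) =
      ∑ θ : ↥K →* ℂˣ, if P θ then
        (Nat.card ↥K : ℂ)⁻¹ * ∑ x : ↥K, ξ (x : G) * ((θ x : ℂˣ) : ℂ) else 0 := by
    refine Finset.sum_congr rfl fun θ _ => ?_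
    by_cases hθ : P θ
    · rw [if_pos hθ, if_pos hθ]
      congr 1
      refine Finset.sum_congr rfl fun x _ => ?_
      rw [hΘ θ hθ x]
    · rw [if_neg hθ, if_neg hθ]
  rw [hstep1]
  -- sum over the subtype
  have hstep2 : (∑ θ : ↥K →* ℂˣ, if P θ then
        (Nat.card ↥K : ℂ)⁻¹ * ∑ x : ↥K, ξ (x : G) * ((θ x : ℂˣ) : ℂ) else 0) =
      ∑ θp : {θ : ↥K →* ℂˣ // P θ},
        (Nat.card ↥K : ℂ)⁻¹ * ∑ x : ↥K, ξ (x : G) * ((θp.1 x : ℂˣ) : ℂ) := by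
    rw [← Finset.sum_filter]
    exact (Finset.sum_subtype _ (fun θ => by simp) _)
  rw [hstep2, ← Equiv.sum_comp e2
    (fun θp : {θ : ↥K →* ℂˣ // P θ} =>
      (Nat.card ↥K : ℂ)⁻¹ * ∑ x : ↥K, ξ (x : G) * ((θp.1 x : ℂˣ) : ℂ))]
  have he2 : ∀ (φ : (↥K ⧸ H) →* ℂˣ) (x : ↥K),
      ((e2 φ).1 x : ℂ) = ((φ (QuotientGroup.mk x) : ℂˣ) : ℂ) := fun φ x => rfl
  simp_rw [he2]
  -- swap the two sums and use orthogonality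
  rw [← Finset.mul_sum, Finset.sum_comm]
  have horth : ∀ x : ↥K,
      (∑ φ : (↥K ⧸ H) →* ℂˣ, ξ (x : G) * ((φ (QuotientGroup.mk x) : ℂˣ) : ℂ)) =
        ξ (x : G) * (if (QuotientGroup.mk x : ↥K ⧸ H) = 1
          then (Fintype.card (↥K ⧸ H) : ℂ) else 0) := fun x => by
    rw [← Finset.mul_sum, sum_char]
  simp_rw [horth]
  -- reduce to a sum over H
  have hmem : ∀ x : ↥K, ((QuotientGroup.mk x : ↥K ⧸ H) = 1) ↔ x ∈ H := fun x =>
    QuotientGroup.eq_one_iff x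
  have hstep3 : (∑ x : ↥K, ξ (x : G) * (if (QuotientGroup.mk x : ↥K ⧸ H) = 1
        then (Fintype.card (↥K ⧸ H) : ℂ) else 0)) =
      (Fintype.card (↥K ⧸ H) : ℂ) * ∑ x : ↥H, ξ (((x : ↥K) : G)) := by
    have : ∀ x : ↥K, ξ (x : G) * (if (QuotientGroup.mk x : ↥K ⧸ H) = 1
        then (Fintype.card (↥K ⧸ H) : ℂ) else 0) =
        if x ∈ H then (Fintype.card (↥K ⧸ H) : ℂ) * ξ (x : G) else 0 := fun x => by
      by_cases hx : x ∈ H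
      · rw [if_pos ((hmem x).mpr hx), if_pos hx, mul_comm]
      · rw [if_neg (fun c => hx ((hmem x).mp c)), if_neg hx, mul_zero]
    simp_rw [this]
    rw [← Finset.sum_filter, Finset.sum_subtype (p := fun x : ↥K => x ∈ H)
      (Finset.univ.filter (· ∈ H))
      (fun x => by simp) (fun x : ↥K => (Fintype.card (↥K ⧸ H) : ℂ) * ξ (x : G))]
    rw [← Finset.mul_sum]
  rw [hstep3]
  -- finally, compare the cardinalities
  have hcard : (Nat.card ↥K : ℂ) = (Fintype.card (↥K ⧸ H) : ℂ) * (Nat.card ↥H : ℂ) := by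
    rw [Subgroup.card_eq_card_quotient_mul_card_subgroup H]
    push_cast [Nat.card_eq_fintype_card]
    ring
  have hH0 : (Nat.card ↥H : ℂ) ≠ 0 := by
    simp [Nat.card_eq_fintype_card, Fintype.card_ne_zero]
  have hQ0 : (Fintype.card (↥K ⧸ H) : ℂ) ≠ 0 := by
    simp [Fintype.card_ne_zero]
  rw [hcard]
  field_simp
end
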